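/- Let G be a bipartite graph on n vertices with m edges and Laplacian eigenvalues μ₁,...,μₙ. Then LE(G*) = 2·LE(G) if and only if |μᵢ − 2m/n| ≥ 1 for all i = 1,...,n. -/

import Mathlib

open Matrix Polynomial BigOperators
open scoped Classical

/-- The extended double cover `G*` of a graph `G`. -/
def edc {V : Type*} (G : SimpleGraph V) : SimpleGraph (V ⊕ V) where
  Adj u v := match u, v with
    | Sum.inl i, Sum.inr j => i = j ∨ G.Adj i j
    | Sum.inr i, Sum.inl j => i = j ∨ G.Adj i j
    | _, _ => False
  symm := ⟨by rintro (i|i) (j|j) h <;> simp_all <;> exact h.imp Eq.symm fun hh => hh.symm⟩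
  loopless := ⟨by rintro (i|i) h <;> simp_all⟩

/-- The Laplacian matrix `L = D − A` of a graph. -/
noncomputable def lap {V : Type*} [Fintype V] [DecidableEq V] (G : SimpleGraph V) :
    Matrix V V ℝ :=
  Matrix.diagonal (fun i => (G.degree i : ℝ)) - G.adjMatrix ℝ

/-!
The change of basis `(x, y) ↦ (x + y, x - y)` on `ℝ^V ⊕ ℝ^V` turns the Laplacian of `G*` into
the block-diagonal matrix `L(G) ⊕ (Q(G) + 2)`, where `Q = D + A` is the signless Laplacian; for
bipartite `G`, conjugating by the `±1` diagonal matrix of a `2`-colouring turns `Q(G)` into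
`L(G)`. So the Laplacian spectrum of `G*` consists of the `μᵢ` and the `μᵢ + 2`. As the average
degree of `G*` is `2m/n + 1`, with `aᵢ = μᵢ - 2m/n` we get
`LE(G*) = Σ (|aᵢ - 1| + |aᵢ + 1|) = Σ 2 max(|aᵢ|, 1)`, which equals `2 LE(G) = Σ 2 |aᵢ|` exactly
when every `|aᵢ| ≥ 1`.
-/

namespace Matrix

variable {ι κ R : Type*} [Fintype ι] [DecidableEq ι] [Fintype κ] [CommRing R]

theorem charpoly_conj_of_mul_eq_one (A P P' : Matrix ι ι R) (h : P * P' = 1) :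
    (P * A * P').charpoly = A.charpoly := by
  rw [charpoly_mul_comm, ← mul_assoc, mul_eq_one_comm.mp h, one_mul]

theorem charpoly_add_scalar (A : Matrix ι ι R) (c : R) :
    (A + scalar ι c).charpoly = A.charpoly.comp (X - C c) := by
  simpa [sub_eq_add_neg] using charpoly_sub_scalar A (-c)

theorem IsHermitian.charpoly_add_scalar {A : Matrix ι ι ℝ} (hA : A.IsHermitian) (c : ℝ) :
    (A + scalar ι c).charpoly = ∏ i, (X - C (hA.eigenvalues i + c)) := by
  rw [Matrix.charpoly_add_scalar, hA.charpoly_eq, Polynomial.prod_comp]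
  simp [sub_sub, add_comm]

theorem IsHermitian.sum_eigenvalues_eq_of_charpoly_eq {A : Matrix ι ι ℝ} (hA : A.IsHermitian)
    {d : κ → ℝ} (h : A.charpoly = ∏ k, (X - C (d k))) (f : ℝ → ℝ) :
    ∑ i, f (hA.eigenvalues i) = ∑ k, f (d k) := by
  have hroots : Finset.univ.val.map hA.eigenvalues = Finset.univ.val.map d := by
    have hprod : ∏ k, (X - C (d k)) = ((Finset.univ.val.map d).map fun a => X - C a).prod := by
      rw [Multiset.map_map]; rfl
    have := hA.roots_charpoly_eq_eigenvalues
    rw [h, hprod, roots_multiset_prod_X_sub_C] at this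
    exact this.symm
  simpa only [Multiset.map_map, Finset.sum_eq_multiset_sum, Function.comp_def] using
    congrArg (fun s => (s.map f).sum) hroots

end Matrix

section ExtendedDoubleCover

section Adjacency

variable {V : Type*} (G : SimpleGraph V)

@[simp] theorem edc_adj_inl_inr (i j : V) : (edc G).Adj (.inl i) (.inr j) ↔ i = j ∨ G.Adj i j :=
  Iff.rfl

@[simp] theorem edc_adj_inr_inl (i j : V) : (edc G).Adj (.inr i) (.inl j) ↔ i = j ∨ G.Adj i j :=
  Iff.rfl

@[simp] theorem not_edc_adj_inl_inl (i j : V) : ¬(edc G).Adj (.inl i) (.inl j) :=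
  id

@[simp] theorem not_edc_adj_inr_inr (i j : V) : ¬(edc G).Adj (.inr i) (.inr j) :=
  id

end Adjacency

variable {V : Type*} [Fintype V] [DecidableEq V] (G : SimpleGraph V)

noncomputable def signlessLap : Matrix V V ℝ :=
  diagonal (fun i => (G.degree i : ℝ)) + G.adjMatrix ℝ

theorem charpoly_signlessLap (hbip : G.Colorable 2) :
    (signlessLap G).charpoly = (lap G).charpoly := by
  obtain ⟨c⟩ := hbip
  set s : Matrix V V ℝ := diagonal fun i => if c i = 0 then 1 else -1
  have hs : s * s = 1 := by
    rw [diagonal_mul_diagonal, ← diagonal_one]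
    congr 1; ext i; split_ifs <;> norm_num
  have hconj : signlessLap G = s * lap G * s := by
    ext i j
    simp only [s, mul_diagonal, diagonal_mul, signlessLap, lap]
    by_cases hij : i = j
    · subst hij
      split_ifs <;> simp
    · have h2 : ∀ a : Fin 2, a = 0 ∨ a = 1 := by decide
      have hcol : G.Adj i j → c i ≠ c j := fun h => c.valid h
      rcases h2 (c i) with h1 | h1 <;> rcases h2 (c j) with h3 | h3 <;>
        by_cases hadj : G.Adj i j <;> simp_all
  rw [hconj, charpoly_conj_of_mul_eq_one _ _ _ hs]

theorem degree_edc_inl (i : V) : (edc G).degree (Sum.inl i) = G.degree i + 1 := by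
  have h : (edc G).neighborFinset (Sum.inl i)
      = (insert i (G.neighborFinset i)).map ⟨Sum.inr, Sum.inr_injective⟩ := by
    ext (j | j) <;> simp [eq_comm]
  rw [SimpleGraph.degree, h, Finset.card_map, Finset.card_insert_of_notMem (by simp),
    SimpleGraph.degree]

theorem degree_edc_inr (i : V) : (edc G).degree (Sum.inr i) = G.degree i + 1 := by
  have h : (edc G).neighborFinset (Sum.inr i)
      = (insert i (G.neighborFinset i)).map ⟨Sum.inl, Sum.inl_injective⟩ := by
    ext (j | j) <;> simp [eq_comm]
  rw [SimpleGraph.degree, h, Finset.card_map, Finset.card_insert_of_notMem (by simp),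
    SimpleGraph.degree]

theorem card_edgeFinset_edc :
    (edc G).edgeFinset.card = 2 * G.edgeFinset.card + Fintype.card V := by
  have hG := G.sum_degrees_eq_twice_card_edges
  have hG' := (edc G).sum_degrees_eq_twice_card_edges
  simp only [Fintype.sum_sum_type, degree_edc_inl, degree_edc_inr, Finset.sum_add_distrib,
    Finset.sum_const, Finset.card_univ, smul_eq_mul, mul_one, hG] at hG'
  omega

theorem lap_edc_eq_fromBlocks :
    lap (edc G) = fromBlocks
      (diagonal (fun i => (G.degree i : ℝ)) + 1) (-(1 + G.adjMatrix ℝ))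
      (-(1 + G.adjMatrix ℝ)) (diagonal (fun i => (G.degree i : ℝ)) + 1) := by
  ext (i | i) (j | j) <;> by_cases hij : i = j <;>
    simp [lap, hij, degree_edc_inl, degree_edc_inr]

theorem charpoly_lap_edc :
    (lap (edc G)).charpoly = (lap G).charpoly * (signlessLap G + scalar V 2).charpoly := by
  let P : Matrix (V ⊕ V) (V ⊕ V) ℝ := fromBlocks 1 1 1 (-1)
  have hP : P * ((2 : ℝ)⁻¹ • P) = 1 := by
    rw [mul_smul_comm, fromBlocks_multiply, ← fromBlocks_one,
      fromBlocks_smul, fromBlocks_inj]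
    refine ⟨?_, ?_, ?_, ?_⟩ <;> simp only [one_mul, neg_mul, mul_neg,
      neg_neg] <;> module
  have h2 : scalar V (2 : ℝ) = (2 : ℝ) • 1 := by simp [smul_one_eq_diagonal]
  have hsplit : P * lap (edc G) * ((2 : ℝ)⁻¹ • P) =
      fromBlocks (lap G) 0 0 (signlessLap G + scalar V 2) := by
    rw [lap_edc_eq_fromBlocks, mul_smul_comm, fromBlocks_multiply, fromBlocks_multiply,
      fromBlocks_smul, fromBlocks_inj]
    refine ⟨?_, ?_, ?_, ?_⟩ <;> simp only [one_mul, neg_mul, mul_neg,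
      neg_neg, mul_one, lap, signlessLap, h2] <;> module
  rw [← charpoly_conj_of_mul_eq_one _ _ _ hP, hsplit, charpoly_fromBlocks_zero₁₂]

theorem two_mul_card_edgeFinset_edc_div [Nonempty V] :
    2 * ((edc G).edgeFinset.card : ℝ) / Fintype.card (V ⊕ V)
      = 2 * (G.edgeFinset.card : ℝ) / Fintype.card V + 1 := by
  have hV : (Fintype.card V : ℝ) ≠ 0 := by positivity
  rw [card_edgeFinset_edc, Fintype.card_sum]
  push_cast
  field_simp
  ring

theorem sum_eigenvalues_lap_edc (hbip : G.Colorable 2) (hL : (lap G).IsHermitian)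
    (hLs : (lap (edc G)).IsHermitian) (f : ℝ → ℝ) :
    ∑ p, f (hLs.eigenvalues p) = ∑ i, (f (hL.eigenvalues i) + f (hL.eigenvalues i + 2)) := by
  have hchar : (lap (edc G)).charpoly =
      ∏ p, (X - C (Sum.elim hL.eigenvalues (hL.eigenvalues · + 2) p)) := by
    rw [charpoly_lap_edc, Matrix.charpoly_add_scalar, charpoly_signlessLap G hbip,
      ← Matrix.charpoly_add_scalar, hL.charpoly_add_scalar, hL.charpoly_eq, Fintype.prod_sum_type]
    simp
  rw [hLs.sum_eigenvalues_eq_of_charpoly_eq hchar, Fintype.sum_sum_type, Finset.sum_add_distrib]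
  rfl

end ExtendedDoubleCover

theorem abs_sub_one_add_abs_add_one (a : ℝ) : |a - 1| + |a + 1| = 2 * max |a| 1 := by
  rcases le_total |a| 1 with h | h
  · obtain ⟨h₁, h₂⟩ := abs_le.mp h
    rw [max_eq_right h, abs_of_nonpos (by linarith : a - 1 ≤ 0),
      abs_of_nonneg (by linarith : 0 ≤ a + 1)]
    ring
  · rw [max_eq_left h]
    rcases le_abs'.mp h with h' | h'
    · rw [abs_of_neg (by linarith : a - 1 < 0), abs_of_nonpos (by linarith : a + 1 ≤ 0),
        abs_of_neg (by linarith : a < 0)]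
      ring
    · rw [abs_of_nonneg (by linarith : 0 ≤ a - 1), abs_of_pos (by linarith : 0 < a + 1),
        abs_of_pos (by linarith : 0 < a)]
      ring

/-- Let `G` be a bipartite graph on `n` vertices with `m` edges and
Laplacian eigenvalues `μ₁,…,μₙ`.  Then `LE(G*) = 2·LE(G)` if and only if
`|μᵢ − 2m/n| ≥ 1` for all `i`, where `LE(H) = Σ |νᵢ − 2M/N|` over the Laplacian
eigenvalues of a graph `H` with `N` vertices and `M` edges. -/
theorem stmt18 {n : ℕ} (G : SimpleGraph (Fin n)) (hbip : G.Colorable 2)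
    (m : ℕ) (hm : G.edgeFinset.card = m)
    (hL : (lap G).IsHermitian) (hLs : (lap (edc G)).IsHermitian) :
    (∑ p, |hLs.eigenvalues p -
        2 * ((edc G).edgeFinset.card : ℝ) / (Fintype.card (Fin n ⊕ Fin n))| =
      2 * ∑ i, |hL.eigenvalues i - 2 * (m : ℝ) / (n : ℝ)|) ↔
    ∀ i, 1 ≤ |hL.eigenvalues i - 2 * (m : ℝ) / (n : ℝ)| := by
  set μ := hL.eigenvalues
  set c : ℝ := 2 * (m : ℝ) / (n : ℝ)
  have hLE : ∑ p, |hLs.eigenvalues p -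
      2 * ((edc G).edgeFinset.card : ℝ) / (Fintype.card (Fin n ⊕ Fin n))| =
      ∑ i, 2 * max |μ i - c| 1 := by
    rw [sum_eigenvalues_lap_edc G hbip hL hLs (fun x => |x - _|)]
    refine Finset.sum_congr rfl fun i _ => ?_
    have : Nonempty (Fin n) := ⟨i⟩
    rw [two_mul_card_edgeFinset_edc_div, hm, Fintype.card_fin, ← abs_sub_one_add_abs_add_one]
    congr 2 <;> ring
  rw [hLE, Finset.mul_sum, eq_comm,
    Finset.sum_eq_sum_iff_of_le fun i _ => by gcongr; exact le_max_left _ _]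
  simp only [Finset.mem_univ, true_implies]
  refine forall_congr' fun i => ?_
  rw [mul_right_inj' two_ne_zero, eq_comm, max_eq_left_iff]
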